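/- Theorem 1 (dynamic-fit bound): Under the MOSP setting with ε > V̄ and λ_1 = 0, the dynamic fit satisfies Fit_T := ‖[Σ_{t=1}^T g_t(x_t)]^+‖ ≤ M + (2·G·R/μ + R²/(2·α·μ) + M²/2)/(ε − V̄). -/

import Mathlib

/-!
Since `[v]⁺ ≥ v`, telescoping the dual update gives `μ ∑_{t ≤ T} g_t(x_t) ≤ λ_{T+1}`, so the fit
is at most `‖λ_{T+1}‖ / μ`. Testing the optimality of `x_t` against the Slater point yields the
drift `⟪λ_t, g_t(x_t)⟫ ≤ GR + R²/(2α) - (ε - V̄) ‖λ_t‖`. Expanding `‖λ_{t+1}‖²` then shows that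
`‖λ_t‖` cannot increase while it exceeds `(GR + R²/(2α) + μM²/2) / (ε - V̄)`, and it grows by at
most `μM` per step, which bounds `‖λ_{T+1}‖`.
-/

open scoped RealInnerProductSpace
open Finset

noncomputable def posProj {m : ℕ} (v : EuclideanSpace ℝ (Fin m)) :
    EuclideanSpace ℝ (Fin m) := WithLp.toLp 2 (fun i => max (v i) 0)

namespace EuclideanSpace

variable {ι : Type*} [Fintype ι]

lemma norm_le_sum_of_nonneg {v : EuclideanSpace ℝ ι} (hv : ∀ i, 0 ≤ v i) :
    ‖v‖ ≤ ∑ i, v i := by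
  rw [EuclideanSpace.norm_eq, Real.sqrt_le_left (sum_nonneg fun i _ => hv i)]
  simpa only [Real.norm_eq_abs, sq_abs] using sum_sq_le_sq_sum_of_nonneg fun i _ => hv i

lemma norm_le_norm_of_abs_le {u v : EuclideanSpace ℝ ι} (h : ∀ i, |u i| ≤ |v i|) :
    ‖u‖ ≤ ‖v‖ := by
  simp only [EuclideanSpace.norm_eq, Real.norm_eq_abs]
  exact Real.sqrt_le_sqrt (sum_le_sum fun i _ => pow_le_pow_left₀ (abs_nonneg _) (h i) 2)

lemma inner_eq_sum_mul (u v : EuclideanSpace ℝ ι) : ⟪u, v⟫ = ∑ i, u i * v i := by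
  simp only [PiLp.inner_apply, RCLike.inner_apply, conj_trivial, mul_comm]

lemma inner_le_inner_of_le {w u v : EuclideanSpace ℝ ι} (hw : ∀ i, 0 ≤ w i)
    (h : ∀ i, u i ≤ v i) : ⟪w, u⟫ ≤ ⟪w, v⟫ := by
  simp only [inner_eq_sum_mul]
  gcongr with i
  exacts [hw i, h i]

lemma inner_le_neg_mul_norm {w v : EuclideanSpace ℝ ι} {ε : ℝ} (hw : ∀ i, 0 ≤ w i)
    (hε : 0 ≤ ε) (hv : ∀ i, v i ≤ -ε) : ⟪w, v⟫ ≤ -(ε * ‖w‖) := by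
  calc ⟪w, v⟫ ≤ ∑ i, w i * -ε := by
        rw [inner_eq_sum_mul]
        gcongr with i
        exacts [hw i, hv i]
    _ = -(ε * ∑ i, w i) := by rw [← sum_mul]; ring
    _ ≤ -(ε * ‖w‖) := by gcongr; exact norm_le_sum_of_nonneg hw

end EuclideanSpace

section PositiveProjection

open EuclideanSpace

variable {m : ℕ}

lemma le_posProj_apply (v : EuclideanSpace ℝ (Fin m)) (i : Fin m) : v i ≤ posProj v i :=
  le_max_left _ _

lemma posProj_apply_nonneg (v : EuclideanSpace ℝ (Fin m)) (i : Fin m) : 0 ≤ posProj v i :=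
  le_max_right _ _

lemma norm_posProj_le (v : EuclideanSpace ℝ (Fin m)) : ‖posProj v‖ ≤ ‖v‖ :=
  norm_le_norm_of_abs_le fun i => by
    rw [abs_of_nonneg (posProj_apply_nonneg v i)]
    exact max_le (le_abs_self _) (abs_nonneg _)

lemma norm_posProj_le_of_le {v w : EuclideanSpace ℝ (Fin m)} (hw : ∀ i, 0 ≤ w i)
    (h : ∀ i, v i ≤ w i) : ‖posProj v‖ ≤ ‖w‖ :=
  norm_le_norm_of_abs_le fun i => by
    rw [abs_of_nonneg (posProj_apply_nonneg v i), abs_of_nonneg (hw i)]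
    exact max_le (h i) (hw i)

lemma inner_le_mul_norm_posProj {w : EuclideanSpace ℝ (Fin m)} (hw : ∀ i, 0 ≤ w i)
    (v : EuclideanSpace ℝ (Fin m)) : ⟪w, v⟫ ≤ ‖w‖ * ‖posProj v‖ :=
  (inner_le_inner_of_le hw (le_posProj_apply v)).trans (real_inner_le_norm _ _)

lemma norm_posProj_add_smul_le {μ : ℝ} (hμ : 0 ≤ μ) (l y : EuclideanSpace ℝ (Fin m)) :
    ‖posProj (l + μ • y)‖ ≤ ‖l‖ + μ * ‖y‖ := by
  calc ‖posProj (l + μ • y)‖ ≤ ‖l + μ • y‖ := norm_posProj_le _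
    _ ≤ ‖l‖ + ‖μ • y‖ := norm_add_le _ _
    _ = ‖l‖ + μ * ‖y‖ := by rw [norm_smul, Real.norm_of_nonneg hμ]

lemma norm_posProj_add_smul_sq_le (μ : ℝ) (l y : EuclideanSpace ℝ (Fin m)) :
    ‖posProj (l + μ • y)‖ ^ 2 ≤ ‖l‖ ^ 2 + 2 * μ * ⟪l, y⟫ + μ ^ 2 * ‖y‖ ^ 2 := by
  calc ‖posProj (l + μ • y)‖ ^ 2 ≤ ‖l + μ • y‖ ^ 2 := by gcongr; exact norm_posProj_le _
    _ = ‖l‖ ^ 2 + 2 * μ * ⟪l, y⟫ + μ ^ 2 * ‖y‖ ^ 2 := by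
      rw [norm_add_sq_real, real_inner_smul_right, norm_smul, Real.norm_eq_abs, mul_pow,
        sq_abs]
      ring

end PositiveProjection

lemma le_add_of_drift {a : ℕ → ℝ} {B c : ℝ} (h0 : a 0 ≤ B + c)
    (hstep : ∀ t, a (t + 1) ≤ a t + c) (hdrift : ∀ t, B < a t → a (t + 1) ≤ a t) :
    ∀ t, a t ≤ B + c
  | 0 => h0
  | t + 1 => by
    rcases le_or_gt (a t) B with hle | hlt
    · linarith [hstep t]
    · exact (hdrift t hlt).trans (le_add_of_drift h0 hstep hdrift t)

section DualUpdate

variable {m : ℕ} {μ : ℝ} {y lam : ℕ → EuclideanSpace ℝ (Fin m)}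

lemma dualUpdate_nonneg (hlam0 : lam 0 = 0)
    (hlam : ∀ t, lam (t + 1) = posProj (lam t + μ • y t)) : ∀ t i, 0 ≤ lam t i
  | 0, i => by simp [hlam0]
  | t + 1, i => hlam t ▸ posProj_apply_nonneg _ i

lemma smul_sum_le_dualUpdate (hlam0 : lam 0 = 0)
    (hlam : ∀ t, lam (t + 1) = posProj (lam t + μ • y t)) :
    ∀ N i, μ * ∑ t ∈ range N, y t i ≤ lam N i
  | 0, i => by simp [hlam0]
  | N + 1, i => by
    have hN := smul_sum_le_dualUpdate hlam0 hlam N i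
    have hup : lam N i + μ * y N i ≤ lam (N + 1) i := by
      rw [hlam N]
      exact le_posProj_apply (lam N + μ • y N) i
    rw [sum_range_succ, mul_add]
    linarith

lemma norm_posProj_sum_le_dualUpdate (hμ : 0 < μ) (hlam0 : lam 0 = 0)
    (hlam : ∀ t, lam (t + 1) = posProj (lam t + μ • y t)) (N : ℕ) :
    ‖posProj (∑ t ∈ range N, y t)‖ ≤ ‖lam N‖ / μ := by
  have hle : ∀ i, (∑ t ∈ range N, y t) i ≤ (μ⁻¹ • lam N) i := fun i => by
    rw [WithLp.ofLp_sum, Finset.sum_apply, PiLp.smul_apply, smul_eq_mul, ← div_eq_inv_mul,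
      le_div_iff₀' hμ]
    exact smul_sum_le_dualUpdate hlam0 hlam N i
  have hnonneg : ∀ i, 0 ≤ (μ⁻¹ • lam N) i := fun i =>
    mul_nonneg (inv_nonneg.2 hμ.le) (dualUpdate_nonneg hlam0 hlam N i)
  calc ‖posProj (∑ t ∈ range N, y t)‖ ≤ ‖μ⁻¹ • lam N‖ := norm_posProj_le_of_le hnonneg hle
    _ = ‖lam N‖ / μ := by rw [norm_smul, norm_inv, Real.norm_of_nonneg hμ.le, inv_mul_eq_div]

lemma norm_dualUpdate_le {K M δ : ℝ} (hμ : 0 < μ) (hδ : 0 < δ) (hlam0 : lam 0 = 0)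
    (hlam : ∀ t, lam (t + 1) = posProj (lam t + μ • y t)) (hy : ∀ t, ‖y t‖ ≤ M)
    (hdrift : ∀ t, ⟪lam t, y t⟫ ≤ K - δ * ‖lam t‖) (t : ℕ) :
    ‖lam t‖ ≤ (K + μ * M ^ 2 / 2) / δ + μ * M := by
  have hK : 0 ≤ K := by simpa [hlam0] using hdrift 0
  have hM : 0 ≤ M := (norm_nonneg _).trans (hy 0)
  refine le_add_of_drift (a := fun t => ‖lam t‖) ?_ (fun t => ?_) (fun t ht => ?_) t
  · simp only [hlam0, norm_zero]
    positivity
  · rw [hlam t]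
    exact (norm_posProj_add_smul_le hμ.le _ _).trans (by gcongr; exact hy t)
  · have hδB : K + μ * M ^ 2 / 2 < δ * ‖lam t‖ := by rwa [div_lt_iff₀' hδ] at ht
    have hsq : ‖lam (t + 1)‖ ^ 2 ≤ ‖lam t‖ ^ 2 := by
      calc ‖lam (t + 1)‖ ^ 2
          ≤ ‖lam t‖ ^ 2 + 2 * μ * ⟪lam t, y t⟫ + μ ^ 2 * ‖y t‖ ^ 2 :=
            hlam t ▸ norm_posProj_add_smul_sq_le μ (lam t) (y t)
        _ ≤ ‖lam t‖ ^ 2 + 2 * μ * (K - δ * ‖lam t‖) + μ ^ 2 * M ^ 2 := by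
            gcongr
            exacts [hdrift t, hy t]
        _ ≤ ‖lam t‖ ^ 2 := by nlinarith
    exact pow_le_pow_iff_left₀ (norm_nonneg _) (norm_nonneg _) two_ne_zero |>.1 hsq

end DualUpdate

lemma inner_le_of_prox_step {E : Type*} [NormedAddCommGroup E] [InnerProductSpace ℝ E]
    {α a b : ℝ} (hα : 0 < α) {p u u' z : E}
    (hopt : ⟪p, u' - u⟫ + a + ‖u' - u‖ ^ 2 / (2 * α) ≤ ⟪p, z - u⟫ + b + ‖z - u‖ ^ 2 / (2 * α)) :
    a ≤ ⟪p, z - u'⟫ + b + ‖z - u‖ ^ 2 / (2 * α) := by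
  have hsplit : ⟪p, z - u⟫ = ⟪p, z - u'⟫ + ⟪p, u' - u⟫ := by
    rw [← inner_add_right, sub_add_sub_cancel]
  have : 0 ≤ ‖u' - u‖ ^ 2 / (2 * α) := by positivity
  linarith

lemma inner_dual_le_of_prox_step {n m : ℕ} {α G R ε V : ℝ} (hα : 0 < α) (hε : 0 ≤ ε)
    {p u u' z : EuclideanSpace ℝ (Fin n)} {w gNew gSlater gNext : EuclideanSpace ℝ (Fin m)}
    (hw : ∀ i, 0 ≤ w i) (hp : ‖p‖ ≤ G) (hzu' : ‖z - u'‖ ≤ R) (hzu : ‖z - u‖ ≤ R)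
    (hSlater : ∀ i, gSlater i ≤ -ε) (hvar : ‖posProj (gNext - gNew)‖ ≤ V)
    (hopt : ⟪p, u' - u⟫ + ⟪w, gNew⟫ + ‖u' - u‖ ^ 2 / (2 * α) ≤
      ⟪p, z - u⟫ + ⟪w, gSlater⟫ + ‖z - u‖ ^ 2 / (2 * α)) :
    ⟪w, gNext⟫ ≤ G * R + R ^ 2 / (2 * α) - (ε - V) * ‖w‖ := by
  have hprox := inner_le_of_prox_step hα hopt
  have hgrad : ⟪p, z - u'⟫ ≤ G * R :=
    (real_inner_le_norm _ _).trans
      (mul_le_mul hp hzu' (norm_nonneg _) ((norm_nonneg _).trans hp))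
  have hdist : ‖z - u‖ ^ 2 / (2 * α) ≤ R ^ 2 / (2 * α) := by gcongr
  have hslater := EuclideanSpace.inner_le_neg_mul_norm hw hε hSlater
  have hchange : ⟪w, gNext - gNew⟫ ≤ ‖w‖ * V :=
    (inner_le_mul_norm_posProj hw _).trans (by gcongr)
  rw [inner_sub_right] at hchange
  linarith

theorem mosp_dynamic_fit_bound_general {n m : ℕ} (T : ℕ) (X : Set (EuclideanSpace ℝ (Fin n)))
    (R G M ε Vbar α μ : ℝ)
    (hR : ∀ x ∈ X, ∀ y ∈ X, ‖x - y‖ ≤ R)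
    (f : ℕ → EuclideanSpace ℝ (Fin n) → ℝ)
    (hG : ∀ t, ∀ x ∈ X, ‖gradient (f t) x‖ ≤ G)
    (g : ℕ → EuclideanSpace ℝ (Fin n) → EuclideanSpace ℝ (Fin m))
    (hM : ∀ t, ∀ x ∈ X, ‖g t x‖ ≤ M)
    (hε : 0 < ε)
    (hSlater : ∃ xt ∈ X, ∀ t, ∀ i, g t xt i ≤ -ε)
    (hvar : ∀ t, ∀ x ∈ X, ‖posProj (g (t + 1) x - g t x)‖ ≤ Vbar)
    (hεV : Vbar < ε)
    (hα : 0 < α) (hμ : 0 < μ)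
    (x : ℕ → EuclideanSpace ℝ (Fin n))
    (lam : ℕ → EuclideanSpace ℝ (Fin m))
    (hx0 : x 0 ∈ X) (hlam1 : lam 1 = 0)
    (hprimal : ∀ t, 1 ≤ t → x t ∈ X ∧ ∀ z ∈ X,
      ⟪gradient (f (t - 1)) (x (t - 1)), x t - x (t - 1)⟫ + ⟪lam t, g (t - 1) (x t)⟫ +
          ‖x t - x (t - 1)‖ ^ 2 / (2 * α) ≤
        ⟪gradient (f (t - 1)) (x (t - 1)), z - x (t - 1)⟫ + ⟪lam t, g (t - 1) z⟫ +
          ‖z - x (t - 1)‖ ^ 2 / (2 * α))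
    (hdual : ∀ t, 1 ≤ t → lam (t + 1) = posProj (lam t + μ • g t (x t))) :
    ‖posProj (∑ t ∈ Icc 1 T, g t (x t))‖ ≤
      M + (2 * G * R / μ + R ^ 2 / (2 * α * μ) + M ^ 2 / 2) / (ε - Vbar) := by
  obtain ⟨xs, hxsX, hxs⟩ := hSlater
  have hxX : ∀ t, x t ∈ X
    | 0 => hx0
    | t + 1 => (hprimal (t + 1) t.succ_pos).1
  have hupdate : ∀ s, lam (s + 1 + 1) = posProj (lam (s + 1) + μ • g (s + 1) (x (s + 1))) :=
    fun s => hdual (s + 1) s.succ_pos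
  have hnonneg := dualUpdate_nonneg (lam := fun s => lam (s + 1)) hlam1 hupdate
  have hdrift (s : ℕ) : ⟪lam (s + 1), g (s + 1) (x (s + 1))⟫ ≤
      G * R + R ^ 2 / (2 * α) - (ε - Vbar) * ‖lam (s + 1)‖ :=
    inner_dual_le_of_prox_step hα hε.le (hnonneg s) (hG s _ (hxX s))
      (hR _ hxsX _ (hxX _)) (hR _ hxsX _ (hxX _)) (hxs s) (hvar s _ (hxX _))
      ((hprimal (s + 1) s.succ_pos).2 xs hxsX)
  have hlamT := norm_dualUpdate_le (lam := fun s => lam (s + 1)) hμ (sub_pos.2 hεV) hlam1 hupdate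
    (fun s => hM _ _ (hxX _)) hdrift T
  have hreindex : ∑ t ∈ Icc 1 T, g t (x t) = ∑ s ∈ range T, g (s + 1) (x (s + 1)) := by
    rw [← Ico_add_one_right_eq_Icc, sum_Ico_eq_sum_range, Nat.add_sub_cancel]
    simp only [add_comm]
  have hGR : 0 ≤ G * R := mul_nonneg ((norm_nonneg _).trans (hG 0 _ hx0))
    ((norm_nonneg _).trans (hR _ hx0 _ hx0))
  calc ‖posProj (∑ t ∈ Icc 1 T, g t (x t))‖ ≤ ‖lam (T + 1)‖ / μ := hreindex ▸
        norm_posProj_sum_le_dualUpdate (lam := fun s => lam (s + 1))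
          (y := fun s => g (s + 1) (x (s + 1))) hμ hlam1 hupdate T
    _ ≤ ((G * R + R ^ 2 / (2 * α) + μ * M ^ 2 / 2) / (ε - Vbar) + μ * M) / μ := by gcongr
    _ = M + (G * R / μ + R ^ 2 / (2 * α * μ) + M ^ 2 / 2) / (ε - Vbar) := by
        field_simp
        ring
    _ ≤ M + (2 * G * R / μ + R ^ 2 / (2 * α * μ) + M ^ 2 / 2) / (ε - Vbar) := by
        gcongr M + (?_ / _ + _ + _) / _
        linarith

/-- Theorem 1 (dynamic-fit bound) for the MOSP recursion. -/
theorem mosp_dynamic_fit_bound {n m : ℕ} (hm : 0 < m)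
    (T : ℕ) (hT : 1 ≤ T)
    (X : Set (EuclideanSpace ℝ (Fin n))) (hXne : X.Nonempty) (hXconv : Convex ℝ X)
    (R G M ε Vbar α μ : ℝ)
    (hR : ∀ x ∈ X, ∀ y ∈ X, ‖x - y‖ ≤ R)
    (f : ℕ → EuclideanSpace ℝ (Fin n) → ℝ)
    (hfconv : ∀ t, ConvexOn ℝ Set.univ (f t))
    (hfdiff : ∀ t, Differentiable ℝ (f t))
    (hG : ∀ t, ∀ x ∈ X, ‖gradient (f t) x‖ ≤ G)
    (g : ℕ → EuclideanSpace ℝ (Fin n) → EuclideanSpace ℝ (Fin m))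
    (hgconv : ∀ t i, ConvexOn ℝ Set.univ fun x => g t x i)
    (hM : ∀ t, ∀ x ∈ X, ‖g t x‖ ≤ M)
    (hε : 0 < ε)
    (hSlater : ∃ xt ∈ X, ∀ t, ∀ i, g t xt i ≤ -ε)
    (hVbar : 0 ≤ Vbar)
    (hvar : ∀ t, ∀ x ∈ X, ‖posProj (g (t + 1) x - g t x)‖ ≤ Vbar)
    (hεV : Vbar < ε)
    (hα : 0 < α) (hμ : 0 < μ)
    (x : ℕ → EuclideanSpace ℝ (Fin n))
    (lam : ℕ → EuclideanSpace ℝ (Fin m))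
    (hx0 : x 0 ∈ X) (hlam1 : lam 1 = 0)
    (hprimal : ∀ t, 1 ≤ t → x t ∈ X ∧ ∀ z ∈ X,
      ⟪gradient (f (t - 1)) (x (t - 1)), x t - x (t - 1)⟫ + ⟪lam t, g (t - 1) (x t)⟫ +
          ‖x t - x (t - 1)‖ ^ 2 / (2 * α) ≤
        ⟪gradient (f (t - 1)) (x (t - 1)), z - x (t - 1)⟫ + ⟪lam t, g (t - 1) z⟫ +
          ‖z - x (t - 1)‖ ^ 2 / (2 * α))
    (hdual : ∀ t, 1 ≤ t → lam (t + 1) = posProj (lam t + μ • g t (x t))) :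
    ‖posProj (∑ t ∈ Icc 1 T, g t (x t))‖ ≤
      M + (2 * G * R / μ + R ^ 2 / (2 * α * μ) + M ^ 2 / 2) / (ε - Vbar) :=
  mosp_dynamic_fit_bound_general T X R G M ε Vbar α μ hR f hG g hM hε hSlater hvar hεV hα hμ x lam
    hx0 hlam1 hprimal hdual
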